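/- arXiv:1701.09137 — 6 statements merged into one kernel-verified Lean document; each statement's English description precedes it below -/
import Mathlib

section
/- Suppose the k-linear span of the family {H_i : i ∈ ι} is closed under the Poisson bracket, i.e., for all i₁, i₂ ∈ ι there exist scalars λ_k ∈ k with {H_{i₁}, H_{i₂}} = Σ_k λ_k H_k. Then in fact {H_{i₁}, H_{i₂}} = Σ_k g_{i₁i₂}^k H_k with g_{i₁i₂}^k = 2(b_{i₂i₁}^k − b_{i₁i₂}^k), for all i₁, i₂ ∈ ι. -/
open MvPolynomial

namespace Airy

variable {k : Type*} [Field k] [CharZero k] {ι : Type*} [Fintype ι] [DecidableEq ι]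

/-- The Poisson bracket on polynomials in the variables `x^i = X (Sum.inl i)`,
`y_i = X (Sum.inr i)`, so that `{y_i, x^j} = δ_{ij}`. -/
noncomputable def poissonBracket (f g : MvPolynomial (ι ⊕ ι) k) : MvPolynomial (ι ⊕ ι) k :=
  ∑ i : ι, (pderiv (Sum.inr i) f * pderiv (Sum.inl i) g
          - pderiv (Sum.inl i) f * pderiv (Sum.inr i) g)

/-- The quadratic Hamiltonian
`H_i = -y_i + Σ a_{ijl} x^j x^l + 2 Σ b_{ij}^l x^j y_l + Σ c_i^{jl} y_j y_l`. -/
noncomputable def Ham (a b c : ι → ι → ι → k) (i : ι) : MvPolynomial (ι ⊕ ι) k :=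
  - X (Sum.inr i)
  + ∑ j : ι, ∑ l : ι, C (a i j l) * X (Sum.inl j) * X (Sum.inl l)
  + 2 * ∑ j : ι, ∑ l : ι, C (b i j l) * X (Sum.inl j) * X (Sum.inr l)
  + ∑ j : ι, ∑ l : ι, C (c i j l) * X (Sum.inr j) * X (Sum.inr l)

set_option linter.unusedSectionVars false in
lemma e1 (a b c : ι → ι → ι → k) (j i : ι) :
    eval (0 : ι⊕ι → k) (pderiv (Sum.inr i) (Ham a b c j)) = -(if j = i then 1 else 0) := by
  simp [Ham, pderiv_X, Pi.single_apply, apply_ite constantCoeff]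

set_option linter.unusedSectionVars false in
lemma e2 (a b c : ι → ι → ι → k) (j i : ι) :
    eval (0 : ι⊕ι → k) (pderiv (Sum.inl i) (Ham a b c j)) = 0 := by
  simp [Ham, pderiv_X, Pi.single_apply, apply_ite constantCoeff]

set_option linter.unusedSectionVars false in
lemma e3 (a b c : ι → ι → ι → k) (j i l₀ : ι) :
    eval (0 : ι⊕ι → k) (pderiv (Sum.inr l₀) (pderiv (Sum.inl i) (Ham a b c j)))
      = 2 * b j i l₀ := by
  simp [Ham, pderiv_X, Pi.single_apply, apply_ite constantCoeff,
    apply_ite (pderiv (Sum.inr l₀)), apply_ite (eval (0 : ι⊕ι → k)), map_ofNat]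

/-- if the span of the `H_i` is closed under the Poisson bracket, then
`{H_{i₁}, H_{i₂}} = Σ_l g_{i₁ i₂}^l H_l` with `g_{i₁ i₂}^l = 2 (b_{i₂ i₁}^l - b_{i₁ i₂}^l)`. -/
theorem poissonBracket_ham_eq_structure_constants
    (a b c : ι → ι → ι → k)
    (ha : ∀ i j l, a i j l = a i l j) (hc : ∀ i j l, c i j l = c i l j)
    (hclosed : ∀ i₁ i₂ : ι, ∃ lam : ι → k,
      poissonBracket (Ham a b c i₁) (Ham a b c i₂) = ∑ l : ι, C (lam l) * Ham a b c l) :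
    ∀ i₁ i₂ : ι,
      poissonBracket (Ham a b c i₁) (Ham a b c i₂)
        = ∑ l : ι, C (2 * (b i₂ i₁ l - b i₁ i₂ l)) * Ham a b c l := by
  intro i₁ i₂
  obtain ⟨lam, heq⟩ := hclosed i₁ i₂
  have key : ∀ l₀ : ι, lam l₀ = 2 * (b i₂ i₁ l₀ - b i₁ i₂ l₀) := by
    intro l₀
    have h2 := congrArg (fun p => eval (0 : ι⊕ι → k) (pderiv (Sum.inr l₀) p)) heq
    simp only [poissonBracket, map_sum, map_sub, pderiv_mul, map_add, map_mul,
      e1, e2, e3, mul_zero, zero_mul, add_zero, zero_add, pderiv_C, map_neg,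
      eval_C, neg_mul, mul_neg, mul_ite, mul_one, ite_mul, one_mul,
      Finset.sum_ite_eq, Finset.sum_ite_eq', Finset.mem_univ, if_true,
      Finset.sum_neg_distrib, neg_neg, Finset.sum_sub_distrib, neg_zero] at h2
    linear_combination h2
  rw [heq]
  exact Finset.sum_congr rfl fun l _ => by rw [key l]

end Airy
end

section
/- Suppose the k-linear span of the family {H_i : i ∈ ι} is closed under the Poisson bracket. Then the tensor a is symmetric under all permutations of its three indices; equivalently, given the assumed symmetry a_{ijk} = a_{ikj}, one has a_{ijk} = a_{jik} for all i, j, k ∈ ι. -/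
open MvPolynomial

namespace Airy

variable {k : Type*} [Field k] [CharZero k] {ι : Type*} [Fintype ι] [DecidableEq ι]

lemma hp2 : ∀ v : ι ⊕ ι, pderiv v (2 : MvPolynomial (ι ⊕ ι) k) = 0 := fun v => by
  rw [← map_ofNat (C : k →+* MvPolynomial (ι ⊕ ι) k) 2, pderiv_C]

lemma sum_sum_ite {M : Type*} [AddCommMonoid M] (f : ι → ι → M) (i : ι) :
    (∑ x : ι, ∑ y : ι, if x = i then f x y else 0) = ∑ y : ι, f i y := by
  rw [Finset.sum_comm]; simp

lemma pd_inl (a b c : ι → ι → ι → k) (i i₁ : ι) :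
    pderiv (Sum.inl i) (Ham a b c i₁) =
      (∑ m : ι, C (a i₁ i m + a i₁ m i) * X (Sum.inl m))
      + 2 * ∑ m : ι, C (b i₁ i m) * X (Sum.inr m) := by
  simp only [Ham, map_add, map_neg, map_sum, map_mul, Derivation.leibniz, pderiv_X, pderiv_C,
    smul_eq_mul, Pi.single_apply, Sum.inl.injEq, Sum.inr.injEq, reduceCtorEq, if_false,
    mul_zero, zero_mul, add_zero, zero_add, neg_zero, hp2]
  simp only [mul_ite, mul_one, mul_zero, ite_mul, zero_mul, Finset.sum_ite_eq,
    Finset.sum_ite_eq', Finset.mem_univ, if_true, sum_sum_ite, Finset.sum_add_distrib, C_add,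
    add_mul, Finset.sum_const_zero]
  simp [mul_comm]
  rw [add_comm]

lemma pd_inr (a b c : ι → ι → ι → k) (i i₁ : ι) :
    pderiv (Sum.inr i) (Ham a b c i₁) =
      - C (if i₁ = i then (1:k) else 0)
      + 2 * (∑ m : ι, C (b i₁ m i) * X (Sum.inl m))
      + ∑ m : ι, C (c i₁ m i + c i₁ i m) * X (Sum.inr m) := by
  simp only [Ham, map_add, map_neg, map_sum, map_mul, Derivation.leibniz, pderiv_X, pderiv_C,
    smul_eq_mul, Pi.single_apply, Sum.inl.injEq, Sum.inr.injEq, reduceCtorEq, if_false,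
    mul_zero, zero_mul, add_zero, zero_add, neg_zero, hp2]
  simp only [mul_ite, mul_one, mul_zero, ite_mul, zero_mul, Finset.sum_ite_eq,
    Finset.sum_ite_eq', Finset.mem_univ, if_true, sum_sum_ite, Finset.sum_add_distrib, C_add,
    add_mul, Finset.sum_const_zero, apply_ite C, map_one, map_zero]
  simp [mul_comm]

lemma E0l (a b c : ι → ι → ι → k) (i i₁ : ι) :
    eval (0 : ι ⊕ ι → k) (pderiv (Sum.inl i) (Ham a b c i₁)) = 0 := by
  rw [pd_inl]; simp

lemma E0r (a b c : ι → ι → ι → k) (i i₁ : ι) :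
    eval (0 : ι ⊕ ι → k) (pderiv (Sum.inr i) (Ham a b c i₁)) =
      -(if i₁ = i then (1:k) else 0) := by
  rw [pd_inr]; simp

lemma D2ll (a b c : ι → ι → ι → k) (l i i₁ : ι) :
    eval (0 : ι ⊕ ι → k) (pderiv (Sum.inl l) (pderiv (Sum.inl i) (Ham a b c i₁))) =
      a i₁ i l + a i₁ l i := by
  rw [pd_inl]
  simp only [map_add, map_sum, map_mul, Derivation.leibniz, pderiv_X, pderiv_C, smul_eq_mul,
    Pi.single_apply, Sum.inl.injEq, Sum.inr.injEq, reduceCtorEq, if_false, mul_zero, zero_mul,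
    add_zero, zero_add, hp2]
  simp [Finset.sum_ite_eq', apply_ite (eval (0 : ι ⊕ ι → k))]

lemma D2lr (a b c : ι → ι → ι → k) (l i i₁ : ι) :
    eval (0 : ι ⊕ ι → k) (pderiv (Sum.inl l) (pderiv (Sum.inr i) (Ham a b c i₁))) =
      2 * b i₁ l i := by
  rw [pd_inr]
  simp only [map_add, map_neg, map_sum, map_mul, Derivation.leibniz, pderiv_X, pderiv_C,
    smul_eq_mul, Pi.single_apply, Sum.inl.injEq, Sum.inr.injEq, reduceCtorEq, if_false,
    mul_zero, zero_mul, add_zero, zero_add, neg_zero, hp2]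
  simp [Finset.sum_ite_eq', apply_ite (eval (0 : ι ⊕ ι → k))]
  exact Or.inl (map_ofNat _ 2)


/-- if the span of the `H_i` is closed under the Poisson bracket, then the
tensor `a` is symmetric under all permutations of its indices: given `a_{ijl} = a_{ilj}`,
one has `a_{ijl} = a_{jil}`. -/
theorem a_symm_of_closed_bracket
    (a b c : ι → ι → ι → k)
    (ha : ∀ i j l, a i j l = a i l j) (hc : ∀ i j l, c i j l = c i l j)
    (hclosed : ∀ i₁ i₂ : ι, ∃ lam : ι → k,
      poissonBracket (Ham a b c i₁) (Ham a b c i₂) = ∑ l : ι, C (lam l) * Ham a b c l) :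
    ∀ i j l : ι, a i j l = a j i l := by
  intro i j l
  obtain ⟨lam, h⟩ := hclosed i j
  have h2 := congrArg (fun p => eval (0 : ι ⊕ ι → k) (pderiv (Sum.inl l) p)) h
  simp only [poissonBracket, map_sum, map_sub, Derivation.leibniz, smul_eq_mul, map_add,
    map_mul, eval_sub, eval_add, eval_mul, eval_C, pderiv_C, E0l, E0r, D2ll, D2lr,
    mul_zero, zero_mul, add_zero, zero_add, zero_sub, sub_zero, mul_neg, neg_mul,
    Finset.sum_ite_eq, Finset.sum_ite_eq', Finset.mem_univ, if_true, ite_mul, mul_ite,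
    one_mul, mul_one, neg_zero, Finset.sum_const_zero, Finset.sum_neg_distrib] at h2
  simp only [Finset.sum_sub_distrib, Finset.sum_neg_distrib, Finset.sum_ite_eq,
    Finset.mem_univ, if_true, sub_eq_zero, neg_inj] at h2
  linear_combination (ha i j l - ha j i l - h2) / 2


end Airy
end

section
/- Let s be a symmetric family of scalars s^{ij} = s^{ji} (i, j ∈ ι), and let Φ_s be the k-algebra endomorphism of the polynomial ring determined by x^i ↦ x^i + Σ_j s^{ij} y_j and y_i ↦ y_i. Then for every i ∈ ι, Φ_s applied to the Hamiltonian H_i built from the tensors (a,b,c) equals the Hamiltonian H_i built from the tensors (a, b', c'), where b'_{ij}^k := b_{ij}^k + Σ_l a_{ijl} s^{lk} and c'_i^{jk} := c_i^{jk} + Σ_{l₁,l₂} a_{i l₁ l₂} s^{l₁ j} s^{l₂ k} + Σ_l b_{il}^k s^{lj} + Σ_l b_{il}^j s^{lk}. -/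
open MvPolynomial

/-!
In matrix notation, with `x`, `y` the vectors of variables, `H_i = -y_i + xᵀAx + 2xᵀBy + yᵀCy`
where `A = a_i` is symmetric, `B = b_i`, `C = c_i`. The substitution is the shear `x ↦ x + Sy`.
Expanding, the two cross terms `xᵀASy` and `(Sy)ᵀAx` coincide because `Aᵀ = A`, which gives
`B' = B + AS`, and the `yy`-part becomes `C + SᵀAS + 2SᵀB`; splitting `2SᵀB` as `SᵀB + BᵀS`
(equal quadratic forms in `y`) gives `C'`.
-/

open Matrix

namespace Matrix

variable {m n R : Type*} [Fintype m] [Fintype n] [CommSemiring R]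

theorem dotProduct_mulVec_eq_sum_sum_mul (M : Matrix m n R) (u : m → R) (v : n → R) :
    u ⬝ᵥ M *ᵥ v = ∑ j, ∑ l, M j l * u j * v l := by
  simp only [dotProduct, mulVec, Finset.mul_sum]
  exact Fintype.sum_congr _ _ fun j => Fintype.sum_congr _ _ fun l => by ring

theorem mulVec_dotProduct (S : Matrix m n R) (v : n → R) (w : m → R) :
    S *ᵥ v ⬝ᵥ w = v ⬝ᵥ Sᵀ *ᵥ w := by
  rw [dotProduct_comm, dotProduct_transpose_mulVec]

theorem add_mulVec_dotProduct_mulVec (B S : Matrix m n R) (x : m → R) (y : n → R) :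
    (x + S *ᵥ y) ⬝ᵥ B *ᵥ y = x ⬝ᵥ B *ᵥ y + y ⬝ᵥ (Sᵀ * B) *ᵥ y := by
  rw [add_dotProduct, mulVec_dotProduct, mulVec_mulVec]

theorem IsSymm.add_mulVec_dotProduct_mulVec_add_mulVec {A : Matrix m m R} (hA : A.IsSymm)
    (S : Matrix m n R) (x : m → R) (y : n → R) :
    (x + S *ᵥ y) ⬝ᵥ A *ᵥ (x + S *ᵥ y)
      = x ⬝ᵥ A *ᵥ x + 2 * (x ⬝ᵥ (A * S) *ᵥ y) + y ⬝ᵥ (Sᵀ * A * S) *ᵥ y := by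
  have cross : S *ᵥ y ⬝ᵥ A *ᵥ x = x ⬝ᵥ (A * S) *ᵥ y := by
    rw [mulVec_dotProduct, mulVec_mulVec, ← dotProduct_transpose_mulVec, transpose_mul,
      transpose_transpose, hA.eq]
  rw [mulVec_add, add_dotProduct, dotProduct_add, dotProduct_add, cross, mulVec_dotProduct,
    mulVec_mulVec, mulVec_mulVec, Matrix.mul_assoc]
  ring

theorem IsSymm.quadratic_comp_shear {A : Matrix m m R} (hA : A.IsSymm) (B S : Matrix m n R)
    (C : Matrix n n R) (x : m → R) (y : n → R) :
    (x + S *ᵥ y) ⬝ᵥ A *ᵥ (x + S *ᵥ y) + 2 * ((x + S *ᵥ y) ⬝ᵥ B *ᵥ y) + y ⬝ᵥ C *ᵥ y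
      = x ⬝ᵥ A *ᵥ x + 2 * (x ⬝ᵥ (B + A * S) *ᵥ y)
        + y ⬝ᵥ (C + Sᵀ * A * S + Sᵀ * B + Bᵀ * S) *ᵥ y := by
  have hBS : y ⬝ᵥ (Bᵀ * S) *ᵥ y = y ⬝ᵥ (Sᵀ * B) *ᵥ y := by
    rw [← dotProduct_transpose_mulVec, transpose_mul, transpose_transpose]
  rw [hA.add_mulVec_dotProduct_mulVec_add_mulVec, add_mulVec_dotProduct_mulVec]
  simp only [add_mulVec, dotProduct_add, hBS]
  ring

end Matrix

theorem AlgHom.map_dotProduct_mulVec {R A B m n : Type*} [Fintype m] [Fintype n]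
    [CommSemiring R] [Semiring A] [Semiring B] [Algebra R A] [Algebra R B]
    (f : A →ₐ[R] B) (M : Matrix m n R) (u : m → A) (v : n → A) :
    f (u ⬝ᵥ M.map (algebraMap R A) *ᵥ v) = f ∘ u ⬝ᵥ M.map (algebraMap R B) *ᵥ (f ∘ v) := by
  simp [dotProduct, mulVec, map_sum]

namespace MvPolynomial

variable {R S σ τ : Type*} [CommSemiring R] [CommSemiring S] [Algebra R S]

theorem aeval_sumElim_comp_X_inl (f : σ → S) (g : τ → S) :
    aeval (R := R) (Sum.elim f g) ∘ X ∘ Sum.inl = f := by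
  funext; simp

theorem aeval_sumElim_comp_X_inr (f : σ → S) (g : τ → S) :
    aeval (R := R) (Sum.elim f g) ∘ X ∘ Sum.inr = g := by
  funext; simp

end MvPolynomial

namespace Airy

theorem ham_eq_dotProduct_mulVec {k ι : Type*} [Field k] [Fintype ι] (a b c : ι → ι → ι → k)
    (i : ι) :
    Ham a b c i = -X (Sum.inr i)
      + X ∘ Sum.inl ⬝ᵥ (of (a i)).map (algebraMap k _) *ᵥ X ∘ Sum.inl
      + 2 * (X ∘ Sum.inl ⬝ᵥ (of (b i)).map (algebraMap k _) *ᵥ X ∘ Sum.inr)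
      + X ∘ Sum.inr ⬝ᵥ (of (c i)).map (algebraMap k _) *ᵥ X ∘ Sum.inr := by
  simp only [Ham, dotProduct_mulVec_eq_sum_sum_mul, map_apply, of_apply, algebraMap_eq,
    Function.comp_apply]

variable {k : Type*} [Field k] [CharZero k] {ι : Type*} [Fintype ι] [DecidableEq ι]

theorem gauge_transform_ham_general
    (a b c : ι → ι → ι → k) (s : ι → ι → k)
    (ha : ∀ i j l, a i j l = a i l j) :
    ∀ i : ι,
      MvPolynomial.aeval
        (Sum.elim
          (fun j => X (Sum.inl j) + ∑ l : ι, C (s j l) * X (Sum.inr l))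
          (fun j => (X (Sum.inr j) : MvPolynomial (ι ⊕ ι) k)))
        (Ham a b c i)
      = Ham a
          (fun i j l => b i j l + ∑ m : ι, a i j m * s m l)
          (fun i j l => c i j l
            + (∑ m₁ : ι, ∑ m₂ : ι, a i m₁ m₂ * s m₁ j * s m₂ l)
            + (∑ m : ι, b i m l * s m j) + (∑ m : ι, b i m j * s m l))
          i := by
  intro i
  have hA : (of (a i)).IsSymm := IsSymm.ext_iff.2 fun j l => ha i l j
  have hb : of (fun j l => b i j l + ∑ m, a i j m * s m l) = of (b i) + of (a i) * of s := by
    ext; simp [mul_apply]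
  have hc : of (fun j l => c i j l + (∑ m₁, ∑ m₂, a i m₁ m₂ * s m₁ j * s m₂ l)
        + (∑ m, b i m l * s m j) + (∑ m, b i m j * s m l))
      = of (c i) + (of s)ᵀ * of (a i) * of s + (of s)ᵀ * of (b i) + (of (b i))ᵀ * of s := by
    ext j l
    simp only [of_apply, Matrix.add_apply, mul_apply, transpose_apply, Finset.sum_mul]
    rw [Finset.sum_comm]
    simp only [mul_comm (s _ j)]
  have hx : (fun j => X (Sum.inl j) + ∑ l, C (s j l) * X (Sum.inr l))
      = X ∘ Sum.inl + (of s).map (algebraMap k _) *ᵥ X ∘ Sum.inr := by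
    funext j; simp [mulVec, dotProduct]
  have hy : (fun j => (X (Sum.inr j) : MvPolynomial (ι ⊕ ι) k)) = X ∘ Sum.inr := rfl
  simp only [ham_eq_dotProduct_mulVec, hb, hc, map_add, map_neg, map_mul, map_ofNat,
    AlgHom.map_dotProduct_mulVec, aeval_sumElim_comp_X_inl, aeval_sumElim_comp_X_inr, hx, hy,
    aeval_X, Sum.elim_inr, Function.comp_apply, Matrix.map_add _ (map_add _), Matrix.map_mul,
    transpose_map]
  set f := algebraMap k (MvPolynomial (ι ⊕ ι) k)
  linear_combination (hA.map f).quadratic_comp_shear ((of (b i)).map f) ((of s).map f)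
    ((of (c i)).map f) (X ∘ Sum.inl) (X ∘ Sum.inr)

/-- the gauge transformation `x^i ↦ x^i + Σ_j s^{ij} y_j`, `y_i ↦ y_i`
(for a symmetric family `s`) sends the Hamiltonians of `(a,b,c)` to the Hamiltonians of the
gauge-transformed tensors `(a, b', c')`. -/
theorem gauge_transform_ham
    (a b c : ι → ι → ι → k) (s : ι → ι → k)
    (ha : ∀ i j l, a i j l = a i l j) (hc : ∀ i j l, c i j l = c i l j)
    (hs : ∀ i j, s i j = s j i) :
    ∀ i : ι,
      MvPolynomial.aeval
        (Sum.elim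
          (fun j => X (Sum.inl j) + ∑ l : ι, C (s j l) * X (Sum.inr l))
          (fun j => (X (Sum.inr j) : MvPolynomial (ι ⊕ ι) k)))
        (Ham a b c i)
      = Ham a
          (fun i j l => b i j l + ∑ m : ι, a i j m * s m l)
          (fun i j l => c i j l
            + (∑ m₁ : ι, ∑ m₂ : ι, a i m₁ m₂ * s m₁ j * s m₂ l)
            + (∑ m : ι, b i m l * s m j) + (∑ m : ι, b i m j * s m l))
          i :=
  gauge_transform_ham_general a b c s ha

end Airy
end

section
/- Assume the k-linear span of {H_i : i ∈ ι} is closed under the Poisson bracket (i.e., (a,b,c) is a classical Airy structure). Define ε^can_i := Σ_j b_{ij}^j. Then (a,b,c,ε^can) is a quantum Airy structure; moreover, for an arbitrary family ε : ι → k, the tuple (a,b,c,ε) is a quantum Airy structure if and only if Σ_k g_{i₁i₂}^k (ε_k − ε^can_k) = 0 for all i₁, i₂ ∈ ι (that is, ε − ε^can is a character of the Lie algebra with structure constants g). -/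
open MvPolynomial

namespace Airy

variable {k : Type*} [Field k] [CharZero k] {ι : Type*} [Fintype ι] [DecidableEq ι]

/-- `(a,b,c)` is a classical Airy structure: the Poisson brackets of the Hamiltonians close
with structure constants `g_{i₁i₂}^l = 2 (b_{i₂i₁}^l - b_{i₁i₂}^l)`. -/
def ClassicalAiry (a b c : ι → ι → ι → k) : Prop :=
  ∀ i₁ i₂ : ι,
    poissonBracket (Ham a b c i₁) (Ham a b c i₂)
      = ∑ l : ι, C (2 * (b i₂ i₁ l - b i₁ i₂ l)) * Ham a b c l

/-- `(a,b,c,ε)` is a quantum Airy structure: classical plus the quantum constraint on `ε`. -/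
def QuantumAiry (a b c : ι → ι → ι → k) (ε : ι → k) : Prop :=
  ClassicalAiry a b c ∧
  ∀ i₁ i₂ : ι,
    2 * ∑ j : ι, ∑ l : ι, (c i₁ j l * a i₂ j l - c i₂ j l * a i₁ j l)
      = ∑ l : ι, 2 * (b i₂ i₁ l - b i₁ i₂ l) * ε l

lemma pd2 (i : ι ⊕ ι) : pderiv i (2 : MvPolynomial (ι ⊕ ι) k) = 0 := by
  rw [← map_ofNat (C : k →+* MvPolynomial (ι ⊕ ι) k) 2, pderiv_C]

lemma pd_ite (i : ι ⊕ ι) (P : Prop) [Decidable P] :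
    pderiv i (if P then (1 : MvPolynomial (ι ⊕ ι) k) else 0) = 0 := by
  split <;> simp

lemma pderiv_inl_Ham (a b c : ι → ι → ι → k) (ha : ∀ i j l, a i j l = a i l j) (i m : ι) :
    pderiv (Sum.inl m) (Ham a b c i)
      = 2 * ∑ l : ι, C (a i m l) * X (Sum.inl l) + 2 * ∑ l : ι, C (b i m l) * X (Sum.inr l) := by
  simp only [Ham, map_add, map_neg, map_sum, pderiv_mul, pderiv_X, pderiv_C, Pi.single_apply,
    Sum.inl.injEq, Sum.inr.injEq, reduceCtorEq, if_false, mul_zero, zero_mul, add_zero, zero_add,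
    mul_ite, mul_one, ite_mul, pd2, Finset.sum_add_distrib, Finset.sum_ite_irrel,
    Finset.sum_ite_eq', Finset.mem_univ, if_true, Finset.sum_const_zero, neg_zero]
  have h1 : (∑ x : ι, C (a i x m) * X (Sum.inl x) : MvPolynomial (ι ⊕ ι) k)
      = ∑ x : ι, C (a i m x) * X (Sum.inl x) :=
    Finset.sum_congr rfl fun x _ => by rw [ha]
  rw [h1]; ring

lemma pderiv_inr_Ham (a b c : ι → ι → ι → k) (hc : ∀ i j l, c i j l = c i l j) (i m : ι) :
    pderiv (Sum.inr m) (Ham a b c i)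
      = - (if i = m then (1 : MvPolynomial (ι ⊕ ι) k) else 0)
        + 2 * ∑ j : ι, C (b i j m) * X (Sum.inl j) + 2 * ∑ l : ι, C (c i m l) * X (Sum.inr l) := by
  simp only [Ham, map_add, map_neg, map_sum, pderiv_mul, pderiv_X, pderiv_C, Pi.single_apply,
    Sum.inl.injEq, Sum.inr.injEq, reduceCtorEq, if_false, mul_zero, zero_mul, add_zero, zero_add,
    mul_ite, mul_one, ite_mul, pd2, Finset.sum_add_distrib, Finset.sum_ite_irrel,
    Finset.sum_ite_eq', Finset.mem_univ, if_true, Finset.sum_const_zero, neg_zero]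
  have h1 : (∑ x : ι, C (c i x m) * X (Sum.inr x) : MvPolynomial (ι ⊕ ι) k)
      = ∑ x : ι, C (c i m x) * X (Sum.inr x) :=
    Finset.sum_congr rfl fun x _ => by rw [hc]
  rw [h1]; ring

/-- The key scalar consequence of the classical Airy property, extracted by taking the
mixed second derivatives `∂_{x^n} ∂_{y_n}` at `0` and summing over `n` (a "trace"). -/
lemma key_trace (a b c : ι → ι → ι → k)
    (ha : ∀ i j l, a i j l = a i l j) (hc : ∀ i j l, c i j l = c i l j)
    (hcl : ClassicalAiry a b c) (i₁ i₂ : ι) :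
    2 * ∑ j : ι, ∑ l : ι, (c i₁ j l * a i₂ j l - c i₂ j l * a i₁ j l)
      = ∑ l : ι, 2 * (b i₂ i₁ l - b i₁ i₂ l) * (∑ j : ι, b l j j) := by
  have h2 := congrArg
    (fun P => ∑ n : ι, eval (0 : ι ⊕ ι → k) (pderiv (Sum.inl n) (pderiv (Sum.inr n) P)))
    (hcl i₁ i₂)
  simp only [poissonBracket, pderiv_inl_Ham a b c ha, pderiv_inr_Ham a b c hc, pd_ite,
    map_add, map_neg, map_sum, map_sub, map_mul, pderiv_mul, pderiv_X, pderiv_C,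
    Pi.single_apply, Sum.inl.injEq, Sum.inr.injEq, reduceCtorEq, if_false, mul_zero, zero_mul,
    add_zero, zero_add, mul_ite, mul_one, ite_mul, pd2, Finset.sum_add_distrib,
    Finset.sum_ite_irrel, Finset.sum_ite_eq', Finset.sum_ite_eq, Finset.mem_univ, if_true,
    Finset.sum_const_zero, neg_zero, eval_zero, constantCoeff_C, constantCoeff_X, map_ofNat,
    map_one, sub_zero, zero_sub, one_mul, mul_neg, neg_neg, neg_mul] at h2
  have split : (∑ x : ι, ∑ x_1 : ι,
        (2 * c i₁ x_1 x * (2 * a i₂ x_1 x) + 2 * b i₁ x x_1 * (2 * b i₂ x_1 x) -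
          (2 * b i₁ x_1 x * (2 * b i₂ x x_1) + 2 * a i₁ x_1 x * (2 * c i₂ x_1 x))))
      = 4 * (∑ x : ι, ∑ x_1 : ι, (c i₁ x_1 x * a i₂ x_1 x - c i₂ x_1 x * a i₁ x_1 x))
        + 4 * (∑ x : ι, ∑ x_1 : ι, b i₁ x x_1 * b i₂ x_1 x)
        - 4 * (∑ x : ι, ∑ x_1 : ι, b i₁ x_1 x * b i₂ x x_1) := by
    simp only [Finset.mul_sum, ← Finset.sum_add_distrib, ← Finset.sum_sub_distrib]
    exact Finset.sum_congr rfl fun _ _ => Finset.sum_congr rfl fun _ _ => by ring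
  have hb : (∑ x : ι, ∑ x_1 : ι, b i₁ x x_1 * b i₂ x_1 x)
      = ∑ x : ι, ∑ x_1 : ι, b i₁ x_1 x * b i₂ x x_1 := Finset.sum_comm
  have hca : (∑ x : ι, ∑ x_1 : ι, (c i₁ x_1 x * a i₂ x_1 x - c i₂ x_1 x * a i₁ x_1 x))
      = ∑ j : ι, ∑ l : ι, (c i₁ j l * a i₂ j l - c i₂ j l * a i₁ j l) := Finset.sum_comm
  have hrhs : (∑ x : ι, ∑ x_1 : ι, 2 * (b i₂ i₁ x_1 - b i₁ i₂ x_1) * (2 * b x_1 x x))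
      = 2 * ∑ l : ι, 2 * (b i₂ i₁ l - b i₁ i₂ l) * (∑ j : ι, b l j j) := by
    rw [Finset.sum_comm]
    simp only [Finset.mul_sum]
    exact Finset.sum_congr rfl fun _ _ => Finset.sum_congr rfl fun _ _ => by ring
  rw [split, hb, hca, hrhs] at h2
  linear_combination h2 / 2

lemma sum_sub_split (b : ι → ι → ι → k) (ε : ι → k) (i₁ i₂ : ι) :
    ∑ l : ι, 2 * (b i₂ i₁ l - b i₁ i₂ l) * (ε l - ∑ j : ι, b l j j)
      = (∑ l : ι, 2 * (b i₂ i₁ l - b i₁ i₂ l) * ε l)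
        - ∑ l : ι, 2 * (b i₂ i₁ l - b i₁ i₂ l) * (∑ j : ι, b l j j) := by
  rw [← Finset.sum_sub_distrib]
  exact Finset.sum_congr rfl fun _ _ => by ring

/-- for a classical Airy structure, `ε^can_i = Σ_j b_{ij}^j` gives a quantum Airy
structure, and `(a,b,c,ε)` is a quantum Airy structure iff `ε - ε^can` is annihilated by the
structure constants (i.e. is a character of the Lie algebra `g`). -/
theorem canonical_quantization
    (a b c : ι → ι → ι → k)
    (ha : ∀ i j l, a i j l = a i l j) (hc : ∀ i j l, c i j l = c i l j)
    (hcl : ClassicalAiry a b c) :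
    QuantumAiry a b c (fun i => ∑ j : ι, b i j j) ∧
    ∀ ε : ι → k, QuantumAiry a b c ε ↔
      ∀ i₁ i₂ : ι,
        ∑ l : ι, 2 * (b i₂ i₁ l - b i₁ i₂ l) * (ε l - ∑ j : ι, b l j j) = 0 := by
  refine ⟨⟨hcl, fun i₁ i₂ => key_trace a b c ha hc hcl i₁ i₂⟩, fun ε => ⟨?_, ?_⟩⟩
  · rintro ⟨-, hq⟩ i₁ i₂
    rw [sum_sub_split, ← hq i₁ i₂, ← key_trace a b c ha hc hcl i₁ i₂, sub_self]
  · intro hchar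
    refine ⟨hcl, fun i₁ i₂ => ?_⟩
    have h0 := hchar i₁ i₂
    rw [sum_sub_split] at h0
    linear_combination key_trace a b c ha hc hcl i₁ i₂ - h0

end Airy
end

section
/- Let D be a (not necessarily commutative) ring and ℏ a central element of D such that every additive commutator a·b − b·a (a, b ∈ D) lies in ℏ·D. Let (h_i)_{i∈ι} be a family of elements of D and let J be the left ideal of D generated by {h_i : i ∈ ι}. If for all i, j ∈ ι the commutator h_i·h_j − h_j·h_i lies in ℏ·J := {ℏ·u : u ∈ J}, then for all u, v ∈ J the commutator u·v − v·u lies in ℏ·J. -/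
/-- If `ℏ` is central, all additive commutators of `D` lie in `ℏ·D`, and the
commutators of the generators `h i` of the left ideal `J` lie in `ℏ·J`, then all commutators
of elements of `J` lie in `ℏ·J`. -/
theorem commutator_of_left_ideal_mem_hbar_smul
    {D : Type*} [Ring D] (hbar : D)
    (hcentral : ∀ a : D, hbar * a = a * hbar)
    (hcomm : ∀ a b : D, ∃ u : D, a * b - b * a = hbar * u)
    {ι : Type*} (h : ι → D) (J : Ideal D) (hJ : J = Ideal.span (Set.range h))
    (hbrackets : ∀ i j : ι, ∃ u ∈ J, h i * h j - h j * h i = hbar * u) :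
    ∀ u ∈ J, ∀ v ∈ J, ∃ w ∈ J, u * v - v * u = hbar * w := by
  have key : ∀ a b : D, (∃ w ∈ J, a = hbar * w) → (∃ w ∈ J, b = hbar * w) →
      ∃ w ∈ J, a + b = hbar * w := by
    rintro a b ⟨w1, hw1, rfl⟩ ⟨w2, hw2, rfl⟩
    exact ⟨w1 + w2, J.add_mem hw1 hw2, (mul_add _ _ _).symm⟩
  have keym : ∀ (d a : D), (∃ w ∈ J, a = hbar * w) → ∃ w ∈ J, d * a = hbar * w := by
    rintro d a ⟨w, hw, rfl⟩
    exact ⟨d * w, J.smul_mem d hw, by rw [← mul_assoc, ← hcentral d, mul_assoc]⟩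
  -- step 1: generators against arbitrary elements of J
  have gen : ∀ i : ι, ∀ v ∈ J, ∃ w ∈ J, h i * v - v * h i = hbar * w := by
    intro i v hv
    rw [hJ] at hv
    induction hv using Submodule.span_induction with
    | mem x hx =>
      obtain ⟨j, rfl⟩ := hx
      exact hbrackets i j
    | zero => exact ⟨0, J.zero_mem, by simp⟩
    | add x y hx hy ihx ihy =>
      obtain ⟨w, hw, hwe⟩ := key _ _ ihx ihy
      exact ⟨w, hw, by rw [← hwe]; noncomm_ring⟩
    | smul d x hx ih =>
      have hxJ : x ∈ J := hJ ▸ hx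
      obtain ⟨u, hu⟩ := hcomm (h i) d
      have t1 : ∃ w ∈ J, (h i * d - d * h i) * x = hbar * w :=
        ⟨u * x, J.smul_mem u hxJ, by rw [hu, mul_assoc]⟩
      have t2 := keym d _ ih
      obtain ⟨w, hw, hwe⟩ := key _ _ t1 t2
      refine ⟨w, hw, ?_⟩
      rw [← hwe]
      simp only [smul_eq_mul]
      noncomm_ring
  -- step 2: arbitrary elements of J against arbitrary elements of J
  intro u hu v hv
  rw [hJ] at hu
  induction hu using Submodule.span_induction with
  | mem x hx =>
    obtain ⟨i, rfl⟩ := hx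
    exact gen i v hv
  | zero => exact ⟨0, J.zero_mem, by simp⟩
  | add x y hx hy ihx ihy =>
    obtain ⟨w, hw, hwe⟩ := key _ _ ihx ihy
    exact ⟨w, hw, by rw [← hwe]; noncomm_ring⟩
  | smul d x hx ih =>
    have hxJ : x ∈ J := hJ ▸ hx
    obtain ⟨u', hu'⟩ := hcomm d v
    have t1 : ∃ w ∈ J, (d * v - v * d) * x = hbar * w :=
      ⟨u' * x, J.smul_mem u' hxJ, by rw [hu', mul_assoc]⟩
    have t2 := keym d _ ih
    obtain ⟨w, hw, hwe⟩ := key _ _ t1 t2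
    refine ⟨w, hw, ?_⟩
    rw [← hwe]
    simp only [smul_eq_mul]
    noncomm_ring
end

section
/- The set of substructures of a quantum pre-Airy structure (A, B, C, ε) on V has a least element: there exists a substructure U₀ such that U₀ ⊆ U for every substructure U. (Hence every quantum pre-Airy structure contains a unique primitive substructure.) -/
/-! Over a field, a tensor `x ∈ M ⊗ N` lies in the image of `P ⊗ Q` exactly when every contraction
of `x` with a functional on `N` lies in `P` and every contraction with a functional on `M` lies in
`Q` (expand in a basis; tensoring is right exact). So each axiom of a substructure `U` asks that
certain vectors lie in `U`, or in the image of `U ⊗ U`, which is again of this form; such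
conditions survive arbitrary intersections, and the intersection of all substructures is the
least one. -/

open TensorProduct

namespace Airy

variable {k V : Type*} [Field k] [AddCommGroup V] [Module k V]

/-- The canonical map `U ⊗ U → V ⊗ V` induced by the inclusion of a subspace `U ⊆ V`. -/
noncomputable def incl2 (U : Submodule k V) : (U ⊗[k] U) →ₗ[k] (V ⊗[k] V) :=
  TensorProduct.map U.subtype U.subtype

/-- The canonical map `U ⊗ U ⊗ U → V ⊗ V ⊗ V` induced by the inclusion of `U ⊆ V`. -/
noncomputable def incl3 (U : Submodule k V) :
    (U ⊗[k] (U ⊗[k] U)) →ₗ[k] (V ⊗[k] (V ⊗[k] V)) :=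
  TensorProduct.map U.subtype (incl2 U)

/-- `U` is a substructure of the quantum pre-Airy structure `(A, B, C, ε)`. -/
def IsSubstructure (A : V ⊗[k] (V ⊗[k] V)) (B : V →ₗ[k] (V ⊗[k] V))
    (C : (V ⊗[k] V) →ₗ[k] V) (ε : V) (U : Submodule k V) : Prop :=
  A ∈ LinearMap.range (incl3 U) ∧
  (∀ u ∈ U, B u ∈ LinearMap.range (incl2 U)) ∧
  (∀ w ∈ LinearMap.range (incl2 U), C w ∈ U) ∧
  ε ∈ U

open LinearMap

section Contraction

variable {R M N M' N' : Type*} [CommRing R] [AddCommGroup M] [AddCommGroup N]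
  [AddCommGroup M'] [AddCommGroup N'] [Module R M] [Module R N] [Module R M'] [Module R N']

theorem rid_lTensor_rTensor (g : N →ₗ[R] R) (f : M →ₗ[R] M') (x : M ⊗[R] N) :
    TensorProduct.rid R M' (g.lTensor M' (f.rTensor N x)) =
      f (TensorProduct.rid R M (g.lTensor M x)) := by
  induction x using TensorProduct.induction_on with
  | zero => simp
  | tmul m n => simp
  | add x y hx hy => simp only [map_add, hx, hy]

theorem lid_rTensor_lTensor (f : M →ₗ[R] R) (g : N →ₗ[R] N') (x : M ⊗[R] N) :
    TensorProduct.lid R N' (f.rTensor N' (g.lTensor M x)) =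
      g (TensorProduct.lid R N (f.rTensor N x)) := by
  induction x using TensorProduct.induction_on with
  | zero => simp
  | tmul m n => simp
  | add x y hx hy => simp only [map_add, hx, hy]

theorem eq_zero_of_forall_rid_lTensor_eq_zero [Module.Free R N] {x : M ⊗[R] N}
    (h : ∀ g : Module.Dual R N, TensorProduct.rid R M (g.lTensor M x) = 0) : x = 0 := by
  classical
  refine (equivFinsuppOfBasisRight (Module.Free.chooseBasis R N)).injective ?_
  ext i
  rw [equivFinsuppOfBasisRight_apply, h, map_zero, Finsupp.zero_apply]

theorem eq_zero_of_forall_lid_rTensor_eq_zero [Module.Free R M] {x : M ⊗[R] N}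
    (h : ∀ f : Module.Dual R M, TensorProduct.lid R N (f.rTensor N x) = 0) : x = 0 := by
  classical
  refine (equivFinsuppOfBasisLeft (Module.Free.chooseBasis R M)).injective ?_
  ext i
  rw [equivFinsuppOfBasisLeft_apply, h, map_zero, Finsupp.zero_apply]

theorem mem_range_rTensor_subtype_iff [Module.Free R N] (P : Submodule R M) (x : M ⊗[R] N) :
    x ∈ range (P.subtype.rTensor N) ↔
      ∀ g : Module.Dual R N, TensorProduct.rid R M (g.lTensor M x) ∈ P := by
  constructor
  · rintro ⟨y, rfl⟩ g
    rw [rid_lTensor_rTensor]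
    exact Submodule.coe_mem _
  · intro h
    rw [← rTensor_mkQ, mem_ker]
    refine eq_zero_of_forall_rid_lTensor_eq_zero fun g => ?_
    rw [rid_lTensor_rTensor, Submodule.mkQ_apply, Submodule.Quotient.mk_eq_zero]
    exact h g

theorem mem_range_lTensor_subtype_iff [Module.Free R M] (Q : Submodule R N) (x : M ⊗[R] N) :
    x ∈ range (Q.subtype.lTensor M) ↔
      ∀ f : Module.Dual R M, TensorProduct.lid R N (f.rTensor N x) ∈ Q := by
  constructor
  · rintro ⟨y, rfl⟩ f
    rw [lid_rTensor_lTensor]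
    exact Submodule.coe_mem _
  · intro h
    rw [← lTensor_mkQ, mem_ker]
    refine eq_zero_of_forall_lid_rTensor_eq_zero fun f => ?_
    rw [lid_rTensor_lTensor, Submodule.mkQ_apply, Submodule.Quotient.mk_eq_zero]
    exact h f

end Contraction

section Field

variable {M N : Type*} [AddCommGroup M] [AddCommGroup N] [Module k M] [Module k N]

theorem mem_range_map_subtype_iff (P : Submodule k M) (Q : Submodule k N) (x : M ⊗[k] N) :
    x ∈ range (TensorProduct.map P.subtype Q.subtype) ↔
      (∀ g : Module.Dual k N, TensorProduct.rid k M (g.lTensor M x) ∈ P) ∧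
        ∀ f : Module.Dual k M, TensorProduct.lid k N (f.rTensor N x) ∈ Q := by
  rw [← mem_range_rTensor_subtype_iff, ← mem_range_lTensor_subtype_iff]
  constructor
  · rintro ⟨z, rfl⟩
    exact ⟨⟨Q.subtype.lTensor P z, by rw [← rTensor_comp_lTensor]; rfl⟩,
      ⟨P.subtype.rTensor Q z, by rw [← lTensor_comp_rTensor]; rfl⟩⟩
  · rintro ⟨⟨y, rfl⟩, hQ⟩
    have hy : y ∈ range (Q.subtype.lTensor P) := by
      rw [mem_range_lTensor_subtype_iff]
      intro f
      obtain ⟨f', rfl⟩ := LinearMap.exists_extend f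
      rw [rTensor_comp_apply]
      exact (mem_range_lTensor_subtype_iff Q _).1 hQ f'
    obtain ⟨z, rfl⟩ := hy
    exact ⟨z, by rw [← rTensor_comp_lTensor]; rfl⟩

end Field

theorem mem_range_incl2_iff (U : Submodule k V) (x : V ⊗[k] V) :
    x ∈ range (incl2 U) ↔
      (∀ g : Module.Dual k V, TensorProduct.rid k V (g.lTensor V x) ∈ U) ∧
        ∀ f : Module.Dual k V, TensorProduct.lid k V (f.rTensor V x) ∈ U :=
  mem_range_map_subtype_iff U U x

theorem range_incl2_mono {U U' : Submodule k V} (h : U ≤ U') :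
    range (incl2 U) ≤ range (incl2 U') := by
  intro x hx
  rw [mem_range_incl2_iff] at hx ⊢
  exact ⟨fun g => h (hx.1 g), fun f => h (hx.2 f)⟩

theorem range_incl3 (U : Submodule k V) :
    range (incl3 U) = range (TensorProduct.map U.subtype (range (incl2 U)).subtype) := by
  have h : incl3 U = (TensorProduct.map U.subtype (range (incl2 U)).subtype).comp
      ((incl2 U).rangeRestrict.lTensor U) :=
    TensorProduct.ext' fun _ _ => rfl
  rw [h]
  exact range_comp_of_range_eq_top _
    (range_eq_top.2 (lTensor_surjective _ (incl2 U).surjective_rangeRestrict))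

theorem mem_range_incl2_sInf {S : Set (Submodule k V)} {x : V ⊗[k] V}
    (h : ∀ U ∈ S, x ∈ range (incl2 U)) : x ∈ range (incl2 (sInf S)) := by
  simp only [mem_range_incl2_iff, Submodule.mem_sInf] at h ⊢
  exact ⟨fun g U hU => (h U hU).1 g, fun f U hU => (h U hU).2 f⟩

theorem mem_range_incl3_sInf {S : Set (Submodule k V)} {x : V ⊗[k] (V ⊗[k] V)}
    (h : ∀ U ∈ S, x ∈ range (incl3 U)) : x ∈ range (incl3 (sInf S)) := by
  simp only [range_incl3, mem_range_map_subtype_iff, Submodule.mem_sInf] at h ⊢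
  exact ⟨fun g U hU => (h U hU).1 g, fun f => mem_range_incl2_sInf fun U hU => (h U hU).2 f⟩

theorem isSubstructure_sInf {A : V ⊗[k] (V ⊗[k] V)} {B : V →ₗ[k] (V ⊗[k] V)}
    {C : (V ⊗[k] V) →ₗ[k] V} {ε : V} {S : Set (Submodule k V)}
    (hS : ∀ U ∈ S, IsSubstructure A B C ε U) : IsSubstructure A B C ε (sInf S) := by
  refine ⟨mem_range_incl3_sInf fun U hU => (hS U hU).1, fun u hu => ?_, fun w hw => ?_, ?_⟩
  · exact mem_range_incl2_sInf fun U hU => (hS U hU).2.1 u (Submodule.mem_sInf.1 hu U hU)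
  · exact Submodule.mem_sInf.2 fun U hU =>
      (hS U hU).2.2.1 w (range_incl2_mono (sInf_le hU) hw)
  · exact Submodule.mem_sInf.2 fun U hU => (hS U hU).2.2.2

/-- the substructures of a quantum pre-Airy structure have a least element
(the unique primitive substructure). -/
theorem exists_least_substructure (A : V ⊗[k] (V ⊗[k] V)) (B : V →ₗ[k] (V ⊗[k] V))
    (C : (V ⊗[k] V) →ₗ[k] V) (ε : V) :
    ∃ U₀ : Submodule k V, IsSubstructure A B C ε U₀ ∧
      ∀ U : Submodule k V, IsSubstructure A B C ε U → U₀ ≤ U :=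
  ⟨sInf {U | IsSubstructure A B C ε U}, isSubstructure_sInf fun _ hU => hU,
    fun _ hU => sInf_le hU⟩

end Airy
end
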